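/- Neyman-Pearson for discrete Gaussians with different means, part 2: fix σ > 0, d ∈ ℕ, x, δ ∈ ℤ^d. Let p_X, p_Y be the pmfs on ℤ^d of the product discrete Gaussians centered at x and x+δ respectively, and let φ : ℤ^d → ℝ be a (possibly randomized) test with 0 ≤ φ(z) ≤ 1 for all z. Suppose S = {z ∈ ℤ^d : ⟨z,δ⟩ ≥ σ²·ln α + ½(‖δ‖₂² + 2⟨x,δ⟩)} for some real α > 0. If ∑_{z∈ℤ^d} φ(z)·p_X(z) ≤ ∑_{z∈S} p_X(z), then ∑_{z∈ℤ^d} φ(z)·p_Y(z) ≤ ∑_{z∈S} p_Y(z). -/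
import Mathlib


open scoped BigOperators

/-- Discrete Gaussian pmf on ℤ with location `μ` and scale `σ`. -/
noncomputable def dgauss (σ : ℝ) (μ : ℤ) (z : ℤ) : ℝ :=
  Real.exp (-((z : ℝ) - (μ : ℝ)) ^ 2 / (2 * σ ^ 2)) /
    ∑' h : ℤ, Real.exp (-((h : ℝ) - (μ : ℝ)) ^ 2 / (2 * σ ^ 2))

/-- Product discrete Gaussian pmf on `ℤ^d` centered at `x`. -/
noncomputable def dgaussProd (σ : ℝ) (d : ℕ) (x z : Fin d → ℤ) : ℝ :=
  ∏ i, dgauss σ (x i) (z i)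

/-- Standard inner product on `ℝ^d` of (casts of) integer vectors. -/
noncomputable def iprod (d : ℕ) (a b : Fin d → ℤ) : ℝ :=
  ∑ i, (a i : ℝ) * (b i : ℝ)

/-- Squared ℓ₂ norm of (the cast of) an integer vector. -/
noncomputable def nsq (d : ℕ) (a : Fin d → ℤ) : ℝ :=
  ∑ i, ((a i : ℝ)) ^ 2

lemma summable_gauss_nat (c a : ℝ) (hc : 0 < c) :
    Summable fun n : ℕ => Real.exp (-c * ((n : ℝ) - a) ^ 2) := by
  have hgeo : Summable fun n : ℕ => Real.exp (c * (2 * a + 1)) * Real.exp (-(2 * c)) ^ n :=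
    (summable_geometric_of_lt_one (Real.exp_pos _).le
      (Real.exp_lt_one_iff.mpr (by linarith : -(2 * c) < 0))).mul_left _
  refine Summable.of_nonneg_of_le (fun n => (Real.exp_pos _).le) (fun n => ?_) hgeo
  rw [← Real.exp_nat_mul, ← Real.exp_add]
  exact Real.exp_le_exp.mpr (by nlinarith [sq_nonneg ((n : ℝ) - a - 1)])

lemma summable_gauss_int (c a : ℝ) (hc : 0 < c) :
    Summable fun h : ℤ => Real.exp (-c * ((h : ℝ) - a) ^ 2) := by
  apply Summable.of_nat_of_neg
  · exact (summable_gauss_nat c a hc).congr fun n => by push_cast; ring_nf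
  · refine (summable_gauss_nat c (-a) hc).congr fun n => ?_
    push_cast
    ring_nf

lemma Z_const (σ : ℝ) (μ : ℤ) :
    (∑' h : ℤ, Real.exp (-((h : ℝ) - (μ : ℝ)) ^ 2 / (2 * σ ^ 2)))
      = ∑' h : ℤ, Real.exp (-(h : ℝ) ^ 2 / (2 * σ ^ 2)) := by
  rw [← (Equiv.addRight μ).tsum_eq
    (fun h : ℤ => Real.exp (-((h : ℝ) - (μ : ℝ)) ^ 2 / (2 * σ ^ 2)))]
  refine tsum_congr fun h => ?_
  simp only [Equiv.coe_addRight]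
  push_cast
  ring_nf

lemma dgauss_nonneg (σ : ℝ) (μ z : ℤ) : 0 ≤ dgauss σ μ z :=
  div_nonneg (Real.exp_pos _).le (tsum_nonneg fun _ => (Real.exp_pos _).le)

lemma dgauss_summable (σ : ℝ) (hσ : 0 < σ) (μ : ℤ) : Summable (dgauss σ μ) := by
  unfold dgauss
  apply Summable.div_const
  refine (summable_gauss_int (1 / (2 * σ ^ 2)) (μ : ℝ) (by positivity)).congr fun z => ?_
  congr 1
  field_simp

lemma dgaussProd_nonneg (σ : ℝ) (d : ℕ) (x z : Fin d → ℤ) : 0 ≤ dgaussProd σ d x z :=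
  Finset.prod_nonneg fun i _ => dgauss_nonneg σ (x i) (z i)

lemma dgaussProd_summable (σ : ℝ) (hσ : 0 < σ) :
    ∀ (d : ℕ) (x : Fin d → ℤ), Summable (dgaussProd σ d x) := by
  intro d
  induction d with
  | zero => intro x; exact Summable.of_finite
  | succ n ih =>
    intro x
    rw [← Equiv.summable_iff (Fin.consEquiv fun _ => ℤ)]
    refine (((dgauss_summable σ hσ (x 0)).mul_of_nonneg (ih fun i => x i.succ)
      (fun z => dgauss_nonneg σ (x 0) z)
      (fun z => dgaussProd_nonneg σ n _ z))).congr fun p => ?_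
    show dgauss σ (x 0) p.1 * dgaussProd σ n (fun i => x i.succ) p.2
      = dgaussProd σ (n + 1) x (Fin.consEquiv (fun _ => ℤ) p)
    simp [dgaussProd, Fin.prod_univ_succ, Fin.consEquiv]

lemma dgauss_shift (σ : ℝ) (hσ : 0 < σ) (μ ν z : ℤ) :
    dgauss σ (μ + ν) z
      = dgauss σ μ z * Real.exp ((2 * (z : ℝ) * ν - 2 * μ * ν - (ν : ℝ) ^ 2) / (2 * σ ^ 2)) := by
  unfold dgauss
  rw [Z_const σ (μ + ν), Z_const σ μ, div_mul_eq_mul_div, ← Real.exp_add]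
  congr 1
  have hσ' : σ ≠ 0 := ne_of_gt hσ
  push_cast
  field_simp
  ring

lemma dgaussProd_shift (σ : ℝ) (hσ : 0 < σ) (d : ℕ) (x δ z : Fin d → ℤ) :
    dgaussProd σ d (x + δ) z = dgaussProd σ d x z *
      Real.exp ((2 * iprod d z δ - 2 * iprod d x δ - nsq d δ) / (2 * σ ^ 2)) := by
  unfold dgaussProd iprod nsq
  have hE : (2 * (∑ i, (z i : ℝ) * (δ i : ℝ)) - 2 * (∑ i, (x i : ℝ) * (δ i : ℝ))
        - ∑ i, ((δ i : ℝ)) ^ 2) / (2 * σ ^ 2)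
      = ∑ i, (2 * (z i : ℝ) * (δ i : ℝ) - 2 * (x i : ℝ) * (δ i : ℝ) - ((δ i : ℝ)) ^ 2)
          / (2 * σ ^ 2) := by
    rw [← Finset.sum_div]
    congr 1
    rw [Finset.sum_sub_distrib, Finset.sum_sub_distrib, Finset.mul_sum, Finset.mul_sum]
    simp [mul_assoc]
  rw [hE, Real.exp_sum, ← Finset.prod_mul_distrib]
  refine Finset.prod_congr rfl fun i _ => ?_
  simpa using dgauss_shift σ hσ (x i) (δ i) (z i)

/-- Neyman-Pearson for discrete Gaussians with different means, part 2. -/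
theorem neyman_pearson_dgauss_part2 (σ : ℝ) (hσ : 0 < σ) (d : ℕ)
    (x δ : Fin d → ℤ)
    (φ : (Fin d → ℤ) → ℝ) (hφ0 : ∀ z, 0 ≤ φ z) (hφ1 : ∀ z, φ z ≤ 1)
    (α : ℝ) (hα : 0 < α) (S : Set (Fin d → ℤ))
    (hS : S = {z | iprod d z δ ≥
      σ ^ 2 * Real.log α + (1 / 2) * (nsq d δ + 2 * iprod d x δ)})
    (h : ∑' z, φ z * dgaussProd σ d x z ≤ ∑' z : S, dgaussProd σ d x z) :
    ∑' z, φ z * dgaussProd σ d (x + δ) z ≤ ∑' z : S, dgaussProd σ d (x + δ) z := by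
  set pX := dgaussProd σ d x with hpX
  set pY := dgaussProd σ d (x + δ) with hpY
  set E : (Fin d → ℤ) → ℝ :=
    fun z => (2 * iprod d z δ - 2 * iprod d x δ - nsq d δ) / (2 * σ ^ 2) with hEdef
  have hYX : ∀ z, pY z = pX z * Real.exp (E z) := fun z => dgaussProd_shift σ hσ d x δ z
  have hpX0 : ∀ z, 0 ≤ pX z := fun z => dgaussProd_nonneg σ d x z
  have hpY0 : ∀ z, 0 ≤ pY z := fun z => dgaussProd_nonneg σ d (x + δ) z
  have hpXs : Summable pX := dgaussProd_summable σ hσ d x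
  have hpYs : Summable pY := dgaussProd_summable σ hσ d (x + δ)
  have h2σ : (0 : ℝ) < 2 * σ ^ 2 := by positivity
  have hmem : ∀ z, z ∈ S ↔ Real.log α ≤ E z := by
    intro z
    rw [hS]
    simp only [Set.mem_setOf_eq, ge_iff_le, hEdef, le_div_iff₀ h2σ]
    constructor <;> intro hz <;> nlinarith
  have sφX : Summable fun z => φ z * pX z :=
    hpXs.of_nonneg_of_le (fun z => mul_nonneg (hφ0 z) (hpX0 z))
      (fun z => mul_le_of_le_one_left (hpX0 z) (hφ1 z))
  have sφY : Summable fun z => φ z * pY z :=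
    hpYs.of_nonneg_of_le (fun z => mul_nonneg (hφ0 z) (hpY0 z))
      (fun z => mul_le_of_le_one_left (hpY0 z) (hφ1 z))
  have sIX : Summable (S.indicator pX) := hpXs.indicator S
  have sIY : Summable (S.indicator pY) := hpYs.indicator S
  have key : ∀ z, φ z * pY z - S.indicator pY z
      ≤ α * (φ z * pX z - S.indicator pX z) := by
    intro z
    by_cases hz : z ∈ S
    · rw [Set.indicator_of_mem hz, Set.indicator_of_mem hz, hYX z]
      have hE : α ≤ Real.exp (E z) := by
        calc α = Real.exp (Real.log α) := (Real.exp_log hα).symm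
        _ ≤ _ := Real.exp_le_exp.mpr ((hmem z).1 hz)
      nlinarith [mul_nonneg (mul_nonneg (by linarith [hφ1 z] : (0:ℝ) ≤ 1 - φ z) (hpX0 z))
        (by linarith : (0:ℝ) ≤ Real.exp (E z) - α)]
    · rw [Set.indicator_of_notMem hz, Set.indicator_of_notMem hz, hYX z]
      have hE : Real.exp (E z) ≤ α := by
        have : E z ≤ Real.log α := le_of_not_ge (fun hc => hz ((hmem z).2 hc))
        calc Real.exp (E z) ≤ Real.exp (Real.log α) := Real.exp_le_exp.mpr this
        _ = α := Real.exp_log hα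
      nlinarith [mul_nonneg (hφ0 z) (hpX0 z)]
  have hsum : ∑' z, (φ z * pY z - S.indicator pY z)
      ≤ ∑' z, α * (φ z * pX z - S.indicator pX z) :=
    Summable.tsum_le_tsum key (sφY.sub sIY) ((sφX.sub sIX).mul_left α)
  rw [Summable.tsum_sub sφY sIY, tsum_mul_left, Summable.tsum_sub sφX sIX] at hsum
  rw [tsum_subtype S pX] at h
  rw [tsum_subtype S pY]
  have hnp : ∑' z, φ z * pX z - ∑' z, S.indicator pX z ≤ 0 := by linarith
  nlinarith
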